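/- Let n = 12 and S = [[4,62],[2,64]]. There is no equitable 2-partition of the halved 12-cube with quotient matrix S, because the distance-4 distribution matrix S^{(4)} determined by the recursion S·S^{(i)} = C(n−i+2,2)·S^{(i−2)} + i(n−i)·S^{(i)} + C(i+2,2)·S^{(i+2)} (with S^{(0)} = Id, S^{(2)} = S) equals [[−1,496],[16,479]], which has a negative entry. -/

import Mathlib

/-!
Fix a vertex `v` in the first cell `C0` and count the paths `v ∼ w ∼ x` with `x ∈ C0`. Counted
through `w` they number `a·a + b·c = (S²)₀₀ = 140`. Counted through `x`, the endpoint `x = v`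
gives the degree `66`, each of the `a = 4` neighbours of `v` in `C0` gives at least the `20`
common neighbours of adjacent vertices of the halved 12-cube, and the remaining endpoints, at
distance 4 from `v`, give `6·S⁽⁴⁾₀₀ ≥ 0`. So `140 ≥ 66 + 80`, which fails: `S⁽⁴⁾₀₀ = -1`.
-/

open Finset

/-- The hypercube graph on binary words indexed by `ι`. -/
def cube (ι : Type*) [Fintype ι] [DecidableEq ι] : SimpleGraph (ι → ZMod 2) where
  Adj x y := hammingDist x y = 1
  symm := ⟨fun x y h => (hammingDist_comm y x).trans h⟩
  loopless := ⟨fun x h => by simp [hammingDist_self] at h⟩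

instance (ι : Type*) [Fintype ι] [DecidableEq ι] : DecidableRel (cube ι).Adj :=
  fun x y => inferInstanceAs (Decidable (hammingDist x y = 1))

/-- The halved hypercube: even-weight words, adjacent iff Hamming distance 2. -/
def halvedCube (ι : Type*) [Fintype ι] [DecidableEq ι] :
    SimpleGraph {x : ι → ZMod 2 // Even (hammingDist x 0)} where
  Adj x y := hammingDist x.1 y.1 = 2
  symm := ⟨fun x y h => (hammingDist_comm y.1 x.1).trans h⟩
  loopless := ⟨fun x h => by simp [hammingDist_self] at h⟩

instance (ι : Type*) [Fintype ι] [DecidableEq ι] : DecidableRel (halvedCube ι).Adj :=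
  fun x y => inferInstanceAs (Decidable (hammingDist x.1 y.1 = 2))

variable {V : Type*} [Fintype V] [DecidableEq V]

/-- Number of neighbors of `v` in the set `C`. -/
def nbrCount (G : SimpleGraph V) [DecidableRel G.Adj] (v : V) (C : Finset V) : ℕ :=
  (C.filter (G.Adj v)).card

/-- `(C0, C1)` is an equitable 2-partition with quotient matrix `[[a,b],[c,d]]`. -/
def IsEquitable2 (G : SimpleGraph V) [DecidableRel G.Adj] (C0 C1 : Finset V)
    (a b c d : ℕ) : Prop :=
  Disjoint C0 C1 ∧ C0 ∪ C1 = Finset.univ ∧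
  (∀ v ∈ C0, nbrCount G v C0 = a ∧ nbrCount G v C1 = b) ∧
  (∀ v ∈ C1, nbrCount G v C0 = c ∧ nbrCount G v C1 = d)

/-- `C` is an equitable `k`-partition with quotient matrix `S`. -/
def IsEquitableK (G : SimpleGraph V) [DecidableRel G.Adj] {k : ℕ}
    (C : V → Fin k) (S : Fin k → Fin k → ℕ) : Prop :=
  ∀ (v : V) (j : Fin k),
    (Finset.univ.filter (fun w => G.Adj v w ∧ C w = j)).card = S (C v) j

section HammingZModTwo

variable {ι : Type*} [Fintype ι]

lemma natCast_hammingNorm_eq_sum (z : ι → ZMod 2) : (hammingNorm z : ZMod 2) = ∑ i, z i := by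
  have hone : ∀ i ∈ ({i | z i ≠ 0} : Finset ι), z i = 1 := fun i hi =>
    Fin.eq_one_of_ne_zero (z i) (mem_filter.mp hi).2
  rw [← sum_filter_ne_zero, sum_congr rfl hone, sum_const, nsmul_one, hammingNorm]

variable [DecidableEq ι]

lemma hammingNorm_add_single_of_eq_zero {z : ι → ZMod 2} {p : ι} (hp : z p = 0) :
    hammingNorm (z + Pi.single p 1) = hammingNorm z + 1 := by
  have hsupp : univ.filter (fun i => (z + Pi.single p 1 : ι → ZMod 2) i ≠ 0) =
      insert p (univ.filter fun i => z i ≠ 0) := by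
    ext i
    by_cases hi : i = p <;> simp [hi, hp]
  rw [hammingNorm, hsupp, card_insert_of_notMem (by simp [hp]), hammingNorm]

lemma hammingNorm_add_single_of_ne_zero {z : ι → ZMod 2} {p : ι} (hp : z p ≠ 0) :
    hammingNorm (z + Pi.single p 1) + 1 = hammingNorm z := by
  have hp1 : z p + 1 = 0 := by
    rw [show z p = 1 from Fin.eq_one_of_ne_zero _ hp, CharTwo.add_self_eq_zero]
  have hsupp : univ.filter (fun i => (z + Pi.single p 1 : ι → ZMod 2) i ≠ 0) =
      (univ.filter fun i => z i ≠ 0).erase p := by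
    ext i
    by_cases hi : i = p <;> simp [hi, hp1]
  rw [hammingNorm, hsupp, card_erase_add_one (by simpa using hp), hammingNorm]

lemma even_hammingNorm_add_single_add_single {z : ι → ZMod 2} (p q : ι) :
    Even (hammingNorm (z + Pi.single p 1 + Pi.single q 1)) ↔ Even (hammingNorm z) := by
  simp only [← ZMod.natCast_eq_zero_iff_even, natCast_hammingNorm_eq_sum, Pi.add_apply,
    sum_add_distrib, sum_pi_single', mem_univ, if_true]
  rw [add_assoc, CharTwo.add_self_eq_zero, add_zero]

lemma hammingNorm_single_add_single {p q : ι} (hpq : p ≠ q) :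
    hammingNorm (Pi.single p 1 + Pi.single q 1 : ι → ZMod 2) = 2 := by
  have hp : hammingNorm (0 + Pi.single p 1 : ι → ZMod 2) = 1 := by
    simpa using hammingNorm_add_single_of_eq_zero (z := (0 : ι → ZMod 2)) (p := p) rfl
  rw [← zero_add (Pi.single p 1), hammingNorm_add_single_of_eq_zero (by simp [hpq.symm]), hp]

lemma hammingNorm_add_single_add_single {z : ι → ZMod 2} {p q : ι} (hp : z p ≠ 0)
    (hq : z q = 0) : hammingNorm (z + Pi.single p 1 + Pi.single q 1) = hammingNorm z := by
  have hpq : p ≠ q := by rintro rfl; exact hp hq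
  rw [hammingNorm_add_single_of_eq_zero (by simp [hq, hpq.symm]),
    hammingNorm_add_single_of_ne_zero hp]

lemma hammingDist_add_single_add_single_self (x : ι → ZMod 2) {p q : ι} (hpq : p ≠ q) :
    hammingDist x (x + Pi.single p 1 + Pi.single q 1) = 2 := by
  rw [hammingDist_eq_hammingNorm, add_assoc, neg_add_cancel_left,
    hammingNorm_single_add_single hpq]

lemma hammingDist_add_single_add_single {x y : ι → ZMod 2} {p q : ι} (hp : x p ≠ y p)
    (hq : x q = y q) : hammingDist y (x + Pi.single p 1 + Pi.single q 1) = hammingDist x y := by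
  have hp' : (-y + x) p ≠ 0 := by
    rw [Pi.add_apply, Pi.neg_apply, Ne, neg_add_eq_zero]
    exact Ne.symm hp
  have hq' : (-y + x) q = 0 := by rw [Pi.add_apply, Pi.neg_apply, neg_add_eq_zero, hq]
  rw [hammingDist_eq_hammingNorm, ← add_assoc, ← add_assoc,
    hammingNorm_add_single_add_single hp' hq', ← hammingDist_eq_hammingNorm, hammingDist_comm]

lemma single_add_single_injOn (s : Finset ι) :
    Set.InjOn (fun pq : ι × ι => (Pi.single pq.1 1 + Pi.single pq.2 1 : ι → ZMod 2))
      ↑(s ×ˢ sᶜ) := by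
  rintro ⟨p, q⟩ hpq ⟨p', q'⟩ hpq' hsum
  simp only [coe_product, coe_compl, Set.mem_prod, Set.mem_compl_iff, mem_coe] at hpq hpq'
  have hp : p = p' := by
    by_contra h
    simpa [Pi.single_apply, h, ne_of_mem_of_not_mem hpq.1 hpq.2,
      ne_of_mem_of_not_mem hpq.1 hpq'.2] using congrFun hsum p
  have hq : q = q' := by
    by_contra h
    simpa [Pi.single_apply, h, (ne_of_mem_of_not_mem hpq.1 hpq.2).symm,
      (ne_of_mem_of_not_mem hpq'.1 hpq.2).symm] using congrFun hsum q
  rw [hp, hq]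

/-- The common neighbours `x + e_p + e_q` of `x` and `y`, with `p` among the two coordinates where
`x` and `y` differ and `q` among the others. -/
lemma halvedCube_card_commonNeighbors_ge {x y : {x : ι → ZMod 2 // Even (hammingDist x 0)}}
    (hxy : (halvedCube ι).Adj x y) :
    2 * (Fintype.card ι - 2) ≤
      #((halvedCube ι).neighborFinset x ∩ (halvedCube ι).neighborFinset y) := by
  set D : Finset ι := {i | x.1 i ≠ y.1 i}
  have hD : #D = 2 := hxy
  let w : ι × ι → {x : ι → ZMod 2 // Even (hammingDist x 0)} := fun pq =>
    ⟨x.1 + Pi.single pq.1 1 + Pi.single pq.2 1, by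
      rw [hammingDist_zero_right, even_hammingNorm_add_single_add_single,
        ← hammingDist_zero_right]
      exact x.2⟩
  have hmaps : ∀ pq ∈ D ×ˢ Dᶜ, w pq ∈
      (halvedCube ι).neighborFinset x ∩ (halvedCube ι).neighborFinset y := by
    rintro ⟨p, q⟩ hpq
    obtain ⟨hp, hq⟩ := mem_product.mp hpq
    rw [mem_compl] at hq
    have hpq : p ≠ q := ne_of_mem_of_not_mem hp hq
    simp only [D, mem_filter_univ, not_not] at hp hq
    rw [mem_inter, SimpleGraph.mem_neighborFinset, SimpleGraph.mem_neighborFinset]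
    exact ⟨hammingDist_add_single_add_single_self x.1 hpq,
      (hammingDist_add_single_add_single hp hq).trans hxy⟩
  have hinj : Set.InjOn w ↑(D ×ˢ Dᶜ) := fun pq hpq pq' hpq' hw =>
    single_add_single_injOn D hpq hpq' (by simpa [w, add_assoc] using congrArg Subtype.val hw)
  calc 2 * (Fintype.card ι - 2) = #(D ×ˢ Dᶜ) := by rw [card_product, card_compl, hD]
    _ ≤ _ := card_le_card_of_injOn w hmaps hinj

end HammingZModTwo

lemma nbrCount_eq_card_inter (G : SimpleGraph V) [DecidableRel G.Adj] (v : V) (C : Finset V) :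
    nbrCount G v C = #(G.neighborFinset v ∩ C) := by
  rw [nbrCount, inter_comm, ← filter_mem_eq_inter]
  simp

lemma sum_nbrCount_neighborFinset (G : SimpleGraph V) [DecidableRel G.Adj] (v : V)
    (C : Finset V) :
    ∑ w ∈ G.neighborFinset v, nbrCount G w C =
      ∑ x ∈ C, #(G.neighborFinset v ∩ G.neighborFinset x) := by
  refine (sum_card_bipartiteAbove_eq_sum_card_bipartiteBelow (r := G.Adj)).trans
    (sum_congr rfl fun x _ => ?_)
  rw [bipartiteBelow, ← filter_mem_eq_inter]
  simp [G.adj_comm]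

namespace IsEquitable2

variable {G : SimpleGraph V} [DecidableRel G.Adj] {C0 C1 : Finset V} {a b c d : ℕ}

lemma nonempty_left [Nonempty V] (h : IsEquitable2 G C0 C1 a b c d) (hc : c ≠ 0) :
    C0.Nonempty := by
  obtain ⟨u⟩ := ‹Nonempty V›
  rcases mem_union.mp (h.2.1 ▸ mem_univ u) with hu | hu
  · exact ⟨u, hu⟩
  · have hpos : 0 < nbrCount G u C0 := (h.2.2.2 u hu).1 ▸ Nat.pos_of_ne_zero hc
    obtain ⟨w, hw⟩ := card_pos.mp hpos
    exact ⟨w, (mem_filter.mp hw).1⟩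

lemma sum_neighborFinset_eq_add (h : IsEquitable2 G C0 C1 a b c d) (f : V → ℕ) (v : V) :
    ∑ w ∈ G.neighborFinset v, f w =
      ∑ w ∈ G.neighborFinset v ∩ C0, f w + ∑ w ∈ G.neighborFinset v ∩ C1, f w := by
  rw [← sum_union (h.1.mono inter_subset_right inter_subset_right),
    ← inter_union_distrib_left, h.2.1, inter_univ]

lemma sum_nbrCount_left (h : IsEquitable2 G C0 C1 a b c d) {v : V} (hv : v ∈ C0) :
    ∑ w ∈ G.neighborFinset v, nbrCount G w C0 = a * a + b * c := by
  rw [h.sum_neighborFinset_eq_add, sum_congr rfl fun w hw => (h.2.2.1 w (mem_inter.mp hw).2).1,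
    sum_congr rfl fun w hw => (h.2.2.2 w (mem_inter.mp hw).2).1, sum_const, sum_const,
    ← nbrCount_eq_card_inter, ← nbrCount_eq_card_inter, (h.2.2.1 v hv).1, (h.2.2.1 v hv).2,
    smul_eq_mul, smul_eq_mul]

lemma card_neighborFinset_left (h : IsEquitable2 G C0 C1 a b c d) {v : V} (hv : v ∈ C0) :
    #(G.neighborFinset v) = a + b := by
  simpa [← nbrCount_eq_card_inter, (h.2.2.1 v hv).1, (h.2.2.1 v hv).2]
    using h.sum_neighborFinset_eq_add (fun _ => 1) v

lemma add_add_mul_le_mul_add_mul (h : IsEquitable2 G C0 C1 a b c d) {l : ℕ}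
    (hl : ∀ x y, G.Adj x y → l ≤ #(G.neighborFinset x ∩ G.neighborFinset y))
    {v : V} (hv : v ∈ C0) :
    a + b + a * l ≤ a * a + b * c := calc
  a + b + a * l =
      #(G.neighborFinset v ∩ G.neighborFinset v) + ∑ _x ∈ G.neighborFinset v ∩ C0, l := by
    rw [inter_self, h.card_neighborFinset_left hv, sum_const, ← nbrCount_eq_card_inter,
      (h.2.2.1 v hv).1, smul_eq_mul]
  _ ≤ #(G.neighborFinset v ∩ G.neighborFinset v) +
      ∑ x ∈ G.neighborFinset v ∩ C0, #(G.neighborFinset v ∩ G.neighborFinset x) := by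
    gcongr with x hx
    exact hl v x ((G.mem_neighborFinset v x).mp (mem_inter.mp hx).1)
  _ = ∑ x ∈ insert v (G.neighborFinset v ∩ C0), #(G.neighborFinset v ∩ G.neighborFinset x) := by
    rw [sum_insert fun hv' => G.irrefl ((G.mem_neighborFinset v v).mp (mem_inter.mp hv').1)]
  _ ≤ ∑ x ∈ C0, #(G.neighborFinset v ∩ G.neighborFinset x) :=
    sum_le_sum_of_subset (insert_subset hv inter_subset_right)
  _ = a * a + b * c := by rw [← sum_nbrCount_neighborFinset, h.sum_nbrCount_left hv]

end IsEquitable2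

/-- for `n = 12` and `S = [[4,62],[2,64]]`, the distance-4
distribution matrix `S⁽⁴⁾ = (S² - 66·Id - 20·S)/6` equals `[[-1,496],[16,479]]`
(equivalently `S² = 66·Id + 20·S + 6·S⁽⁴⁾`), whose negative entry shows that no
equitable 2-partition of the halved 12-cube has quotient matrix `S`. -/
theorem stmt14 :
    ((!![(4 : ℚ), 62; 2, 64]) ^ 2 - (66 : ℚ) • 1 - (20 : ℚ) • !![(4 : ℚ), 62; 2, 64] =
        (6 : ℚ) • !![(-1 : ℚ), 496; 16, 479]) ∧
      ∀ C0 C1 : Finset {x : Fin 12 → ZMod 2 // Even (hammingDist x 0)},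
        ¬ IsEquitable2 (halvedCube (Fin 12)) C0 C1 4 62 2 64 := by
  refine ⟨?_, fun C0 C1 h => ?_⟩
  · rw [sq, Matrix.mul_fin_two, Matrix.one_fin_two]
    ext i j
    fin_cases i <;> fin_cases j <;> norm_num
  · have : Nonempty {x : Fin 12 → ZMod 2 // Even (hammingDist x 0)} := ⟨⟨0, by simp⟩⟩
    obtain ⟨v, hv⟩ := h.nonempty_left two_ne_zero
    have hcount := h.add_add_mul_le_mul_add_mul (fun _ _ => halvedCube_card_commonNeighbors_ge) hv
    norm_num at hcount
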